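/- Central cancellation in the USAT construction: let z ∈ {0,1}^n and define U ∈ ℂ^(2^(2n) × 2^(2n)) by U := ∑_{x : x₁..ₙ₋₁ = z₁..ₙ₋₁} (|z₁..ₙ₋₁⟩ ⊗ ((1/2)|xₙ⟩ + (-1)^{xₙ} √(3/4) |¬xₙ⟩)) ⊗ |y ⊕ z⟩ ⟨x, y| summed over all y, plus ∑_{x : x₁..ₙ₋₁ ≠ z₁..ₙ₋₁, y} |x₁..ₙ₋₁, ¬xₙ, y⟩⟨x, y|. Then the partial trace of U over the first n qubits equals ∑_{y ∈ {0,1}^n} |y ⊕ z⟩⟨y|, i.e. the unitary XOR-by-z permutation matrix. -/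

import Mathlib

open Matrix

/-- An `n`-bit string (`n = k + 1`) is a pair of its first `n - 1` bits and its last bit. -/
abbrev BitStr (k : ℕ) := (Fin k → Bool) × Bool

/-- Bitwise XOR on `n`-bit strings. -/
def bxor {k : ℕ} (a b : BitStr k) : BitStr k :=
  (fun i => xor (a.1 i) (b.1 i), xor a.2 b.2)

/-- Partial trace over the first `n`-qubit subsystem:
`tr_n(M)_{(y,y')} = ∑_x M_{((x,y),(x,y'))}`. -/
noncomputable def ptrace {k : ℕ}
    (M : Matrix (BitStr k × BitStr k) (BitStr k × BitStr k) ℂ) :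
    Matrix (BitStr k) (BitStr k) ℂ :=
  fun y y' => ∑ x : BitStr k, M (x, y) (x, y')

/-- The USAT-construction unitary `U` (for the case where `z` is the unique
satisfying assignment, so `x ∼ φ` iff the first `n-1` bits of `x` equal those of
`z`): on input `|x, y⟩` with `x₁..ₙ₋₁ = z₁..ₙ₋₁`, it maps to
`|z₁..ₙ₋₁⟩ ⊗ ((1/2)|xₙ⟩ + (-1)^{xₙ}√(3/4)|¬xₙ⟩) ⊗ |y ⊕ z⟩`; otherwise it maps
`|x, y⟩` to `|x₁..ₙ₋₁, ¬xₙ, y⟩`. -/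
noncomputable def Umat {k : ℕ} (z : BitStr k) :
    Matrix (BitStr k × BitStr k) (BitStr k × BitStr k) ℂ :=
  fun p q =>
    let x := q.1; let y := q.2
    if x.1 = z.1 then
      if p.1.1 = z.1 ∧ p.2 = bxor y z then
        (if p.1.2 = x.2 then (1/2 : ℂ)
         else if x.2 then -(Real.sqrt (3/4) : ℂ) else (Real.sqrt (3/4) : ℂ))
      else 0
    else
      if p.1.1 = x.1 ∧ p.1.2 = !x.2 ∧ p.2 = y then 1 else 0

theorem Umat_diag_of_ne {k : ℕ} (z x y y' : BitStr k) (hx : x.1 ≠ z.1) :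
    Umat z (x, y) (x, y') = 0 := by
  simp [Umat, hx]

theorem Umat_diag_of_eq {k : ℕ} (z : BitStr k) (b : Bool) (y y' : BitStr k) :
    Umat z ((z.1, b), y) ((z.1, b), y') = if y = bxor y' z then 1 / 2 else 0 := by
  simp [Umat]

/-- Central cancellation: the partial trace of `U` over the first `n` qubits is
the XOR-by-`z` permutation matrix `∑_y |y ⊕ z⟩⟨y|`. -/
theorem ptrace_Umat (k : ℕ) (z : BitStr k) :
    ptrace (Umat z) = fun p q => if p = bxor q z then (1 : ℂ) else 0 := by
  funext y y'
  calc ptrace (Umat z) y y'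
      = ∑ b : Bool, Umat z ((z.1, b), y) ((z.1, b), y') := by
        simp only [ptrace, Fintype.sum_prod_type]
        exact Finset.sum_eq_single z.1 (fun x _ hx => by simp [Umat_diag_of_ne z (x, _) y y' hx])
          (by simp)
    _ = if y = bxor y' z then 1 else 0 := by
        simp only [Umat_diag_of_eq, Fintype.sum_bool]
        split_ifs <;> norm_num
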